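/- Cut admissibility, positive principal case: if Γ and U are suspension-normal (all suspended propositions in Γ and in U are atomic), Γ ⊢ [A⁺] is derivable, and Γ ; A⁺, Ω ⊢ U is derivable, then Γ ; Ω ⊢ U is derivable in the focused sequent calculus for polarized intuitionistic logic. -/

import Mathlib

namespace StructuralFocalization

/- Polarized propositional intuitionistic logic -/
mutual
inductive PProp : Type
  | atom : Nat → PProp
  | down : NProp → PProp
  | bot  : PProp
  | or   : PProp → PProp → PProp
  | top  : PProp
  | and  : PProp → PProp → PProp
inductive NProp : Type
  | atom : Nat → NProp
  | up   : PProp → NProp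
  | imp  : PProp → NProp → NProp
  | top  : NProp
  | and  : NProp → NProp → NProp
end

/- Hypotheses: negative propositions or suspended positives ⟨A⁺⟩ -/
inductive Hyp : Type
  | neg  : NProp → Hyp
  | susp : PProp → Hyp

/- Succedents: A⁺, A⁻, or suspended ⟨A⁻⟩ -/
inductive Succ : Type
  | pos  : PProp → Succ
  | neg  : NProp → Succ
  | susp : NProp → Succ

abbrev Ctx := List Hyp

def Succ.stable : Succ → Prop
  | .pos _ => True
  | .susp _ => True
  | .neg _ => False

def Hyp.suspNormal : Hyp → Prop
  | .susp (PProp.atom _) => True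
  | .susp _ => False
  | .neg _ => True

def Ctx.suspNormal (Γ : Ctx) : Prop := ∀ h ∈ Γ, h.suspNormal

def Succ.suspNormal : Succ → Prop
  | .susp (NProp.atom _) => True
  | .susp _ => False
  | _ => True

/- The focused sequent calculus (Figures 3 and 4 of "Structural focalization",
   with the generalized id⁺/id⁻ rules for arbitrary suspended propositions). -/
mutual
/-- Right focus: Γ ⊢ [A⁺] -/
inductive RFoc : Ctx → PProp → Prop
  | idP {Γ A} : Hyp.susp A ∈ Γ → RFoc Γ A
  | downR {Γ A} : Inv Γ [] (Succ.neg A) → RFoc Γ (PProp.down A)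
  | orR1 {Γ A B} : RFoc Γ A → RFoc Γ (PProp.or A B)
  | orR2 {Γ A B} : RFoc Γ B → RFoc Γ (PProp.or A B)
  | topR {Γ} : RFoc Γ PProp.top
  | andR {Γ A B} : RFoc Γ A → RFoc Γ B → RFoc Γ (PProp.and A B)
/-- Inversion: Γ ; Ω ⊢ U -/
inductive Inv : Ctx → List PProp → Succ → Prop
  | focR {Γ A} : RFoc Γ A → Inv Γ [] (Succ.pos A)
  | focL {Γ A U} : Hyp.neg A ∈ Γ → Succ.stable U → LFoc Γ A U → Inv Γ [] U
  | etaP {Γ p Ω U} : Inv (Hyp.susp (PProp.atom p) :: Γ) Ω U → Inv Γ (PProp.atom p :: Ω) U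
  | downL {Γ A Ω U} : Inv (Hyp.neg A :: Γ) Ω U → Inv Γ (PProp.down A :: Ω) U
  | botL {Γ Ω U} : Inv Γ (PProp.bot :: Ω) U
  | orL {Γ A B Ω U} : Inv Γ (A :: Ω) U → Inv Γ (B :: Ω) U → Inv Γ (PProp.or A B :: Ω) U
  | topPL {Γ Ω U} : Inv Γ Ω U → Inv Γ (PProp.top :: Ω) U
  | andPL {Γ A B Ω U} : Inv Γ (A :: B :: Ω) U → Inv Γ (PProp.and A B :: Ω) U
  | etaN {Γ p} : Inv Γ [] (Succ.susp (NProp.atom p)) → Inv Γ [] (Succ.neg (NProp.atom p))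
  | upR {Γ A} : Inv Γ [] (Succ.pos A) → Inv Γ [] (Succ.neg (NProp.up A))
  | impR {Γ A B} : Inv Γ [A] (Succ.neg B) → Inv Γ [] (Succ.neg (NProp.imp A B))
  | topNR {Γ} : Inv Γ [] (Succ.neg NProp.top)
  | andNR {Γ A B} : Inv Γ [] (Succ.neg A) → Inv Γ [] (Succ.neg B) →
      Inv Γ [] (Succ.neg (NProp.and A B))
/-- Left focus: Γ ; [A⁻] ⊢ U -/
inductive LFoc : Ctx → NProp → Succ → Prop
  | idN {Γ A} : LFoc Γ A (Succ.susp A)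
  | upL {Γ A U} : Inv Γ [A] U → LFoc Γ (NProp.up A) U
  | impL {Γ A B U} : RFoc Γ A → LFoc Γ B U → LFoc Γ (NProp.imp A B) U
  | andL1 {Γ A B U} : LFoc Γ A U → LFoc Γ (NProp.and A B) U
  | andL2 {Γ A B U} : LFoc Γ B U → LFoc Γ (NProp.and A B) U
end

/- Unpolarized propositions and Kleene's G3 -/
inductive UProp : Type
  | atom : Nat → UProp
  | bot  : UProp
  | or   : UProp → UProp → UProp
  | top  : UProp
  | and  : UProp → UProp → UProp
  | imp  : UProp → UProp → UProp

inductive G3 : List UProp → UProp → Prop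
  | init {Γ p} : UProp.atom p ∈ Γ → G3 Γ (UProp.atom p)
  | botL {Γ Q} : UProp.bot ∈ Γ → G3 Γ Q
  | orR1 {Γ A B} : G3 Γ A → G3 Γ (UProp.or A B)
  | orR2 {Γ A B} : G3 Γ B → G3 Γ (UProp.or A B)
  | orL {Γ A B Q} : UProp.or A B ∈ Γ → G3 (A :: Γ) Q → G3 (B :: Γ) Q → G3 Γ Q
  | topR {Γ} : G3 Γ UProp.top
  | andR {Γ A B} : G3 Γ A → G3 Γ B → G3 Γ (UProp.and A B)
  | andL1 {Γ A B Q} : UProp.and A B ∈ Γ → G3 (A :: Γ) Q → G3 Γ Q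
  | andL2 {Γ A B Q} : UProp.and A B ∈ Γ → G3 (B :: Γ) Q → G3 Γ Q
  | impR {Γ A B} : G3 (A :: Γ) B → G3 Γ (UProp.imp A B)
  | impL {Γ A B Q} : UProp.imp A B ∈ Γ → G3 Γ A → G3 (B :: Γ) Q → G3 Γ Q

/-- G3 with an ordered auxiliary context Ψ: Γ; Ψ ⊢ Q -/
inductive G3Psi : List UProp → List UProp → UProp → Prop
  | cons {Γ P Ψ Q} : G3Psi (P :: Γ) Ψ Q → G3Psi Γ (P :: Ψ) Q
  | nil {Γ Q} : G3 Γ Q → G3Psi Γ [] Q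

/- Erasure -/
mutual
def eraseP : PProp → UProp
  | .atom p => .atom p
  | .down A => eraseN A
  | .bot => .bot
  | .or A B => .or (eraseP A) (eraseP B)
  | .top => .top
  | .and A B => .and (eraseP A) (eraseP B)
def eraseN : NProp → UProp
  | .atom p => .atom p
  | .up A => eraseP A
  | .imp A B => .imp (eraseP A) (eraseN B)
  | .top => .top
  | .and A B => .and (eraseN A) (eraseN B)
end

def eraseHyp : Hyp → UProp
  | .neg A => eraseN A
  | .susp A => eraseP A

def eraseCtx (Γ : Ctx) : List UProp := Γ.map eraseHyp

def eraseSucc : Succ → UProp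
  | .pos A => eraseP A
  | .neg A => eraseN A
  | .susp A => eraseN A

/-!
The four cut principles are proved together. The principal cuts go by induction on the cut
formula; each commutative cut goes by induction on the derivation into which the cut is pushed,
and calls the principal cut at the same formula once it reaches the focus. Suspension-normality
is what makes the identity cases work: a suspension ⟨A⁺⟩ in Γ closing a right focus must be
atomic, so the matching left inversion is η⁺ and the cut becomes contraction; dually, a
suspension ⟨A⁻⟩ in the succedent closing a left focus must be atomic, so the matching right
inversion is η⁻.
-/

theorem _root_.List.cons_subset_cons_cons_of_subset_cons {α : Type*} {a b : α} {l₁ l₂ : List α}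
    (h : l₁ ⊆ a :: l₂) : b :: l₁ ⊆ a :: b :: l₂ :=
  List.cons_subset.2
    ⟨by simp, List.Subset.trans h (List.cons_subset_cons _ (List.subset_cons_self _ _))⟩

theorem Hyp.exists_atom_of_suspNormal_susp {A : PProp} (h : (Hyp.susp A).suspNormal) :
    ∃ p, A = .atom p := by
  cases A <;> simp_all [Hyp.suspNormal]

theorem Succ.exists_atom_of_suspNormal_susp {A : NProp} (h : (Succ.susp A).suspNormal) :
    ∃ p, A = .atom p := by
  cases A <;> simp_all [Succ.suspNormal]

theorem Ctx.suspNormal.cons {h : Hyp} {Γ : Ctx} (hh : h.suspNormal) (hΓ : Γ.suspNormal) :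
    Ctx.suspNormal (h :: Γ) :=
  List.forall_mem_cons.2 ⟨hh, hΓ⟩

mutual
theorem RFoc.weaken {Γ Γ' : Ctx} {A : PProp} (hsub : Γ ⊆ Γ') : RFoc Γ A → RFoc Γ' A
  | .idP m => .idP (hsub m)
  | .downR d => .downR (d.weaken hsub)
  | .orR1 r => .orR1 (r.weaken hsub)
  | .orR2 r => .orR2 (r.weaken hsub)
  | .topR => .topR
  | .andR r₁ r₂ => .andR (r₁.weaken hsub) (r₂.weaken hsub)

theorem Inv.weaken {Γ Γ' : Ctx} {Ω : List PProp} {U : Succ} (hsub : Γ ⊆ Γ') :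
    Inv Γ Ω U → Inv Γ' Ω U
  | .focR r => .focR (r.weaken hsub)
  | .focL m hU l => .focL (hsub m) hU (l.weaken hsub)
  | .etaP d => .etaP (d.weaken (List.cons_subset_cons _ hsub))
  | .downL d => .downL (d.weaken (List.cons_subset_cons _ hsub))
  | .botL => .botL
  | .orL d₁ d₂ => .orL (d₁.weaken hsub) (d₂.weaken hsub)
  | .topPL d => .topPL (d.weaken hsub)
  | .andPL d => .andPL (d.weaken hsub)
  | .etaN d => .etaN (d.weaken hsub)
  | .upR d => .upR (d.weaken hsub)
  | .impR d => .impR (d.weaken hsub)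
  | .topNR => .topNR
  | .andNR d₁ d₂ => .andNR (d₁.weaken hsub) (d₂.weaken hsub)

theorem LFoc.weaken {Γ Γ' : Ctx} {A : NProp} {U : Succ} (hsub : Γ ⊆ Γ') :
    LFoc Γ A U → LFoc Γ' A U
  | .idN => .idN
  | .upL d => .upL (d.weaken hsub)
  | .impL r l => .impL (r.weaken hsub) (l.weaken hsub)
  | .andL1 l => .andL1 (l.weaken hsub)
  | .andL2 l => .andL2 (l.weaken hsub)
end

theorem Inv.weaken_cons {Γ : Ctx} {Ω : List PProp} {U : Succ} (h : Hyp) (d : Inv Γ Ω U) :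
    Inv (h :: Γ) Ω U :=
  d.weaken (List.subset_cons_self _ _)

-- The succedent `.pos A` is abstracted to `V` because structural recursion needs variable indices.
mutual
theorem Inv.cut_right_commutative {A : PProp} {U : Succ} (hU : U.stable)
    (cut : ∀ {Γ : Ctx}, Γ.suspNormal → RFoc Γ A → Inv Γ [A] U → Inv Γ [] U)
    {Γ : Ctx} {Ω : List PProp} {V : Succ} (hΓ : Γ.suspNormal) :
    Inv Γ Ω V → V = .pos A → Inv Γ [A] U → Inv Γ Ω U
  | .focR r, hV, e => by cases hV; exact cut hΓ r e
  | .focL m _ l, hV, e => .focL m hU (l.cut_right_commutative hU cut hΓ hV e)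
  | .etaP d, hV, e =>
    .etaP (d.cut_right_commutative hU cut (hΓ.cons trivial) hV (e.weaken_cons _))
  | .downL d, hV, e =>
    .downL (d.cut_right_commutative hU cut (hΓ.cons trivial) hV (e.weaken_cons _))
  | .botL, _, _ => .botL
  | .orL d₁ d₂, hV, e =>
    .orL (d₁.cut_right_commutative hU cut hΓ hV e) (d₂.cut_right_commutative hU cut hΓ hV e)
  | .topPL d, hV, e => .topPL (d.cut_right_commutative hU cut hΓ hV e)
  | .andPL d, hV, e => .andPL (d.cut_right_commutative hU cut hΓ hV e)
  | .etaN _, hV, _ | .upR _, hV, _ | .impR _, hV, _ | .topNR, hV, _ | .andNR _ _, hV, _ =>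
    nomatch hV

theorem LFoc.cut_right_commutative {A : PProp} {U : Succ} (hU : U.stable)
    (cut : ∀ {Γ : Ctx}, Γ.suspNormal → RFoc Γ A → Inv Γ [A] U → Inv Γ [] U)
    {Γ : Ctx} {B : NProp} {V : Succ} (hΓ : Γ.suspNormal) :
    LFoc Γ B V → V = .pos A → Inv Γ [A] U → LFoc Γ B U
  | .idN, hV, _ => nomatch hV
  | .upL d, hV, e => .upL (d.cut_right_commutative hU cut hΓ hV e)
  | .impL r l, hV, e => .impL r (l.cut_right_commutative hU cut hΓ hV e)
  | .andL1 l, hV, e => .andL1 (l.cut_right_commutative hU cut hΓ hV e)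
  | .andL2 l, hV, e => .andL2 (l.cut_right_commutative hU cut hΓ hV e)
end

mutual
theorem RFoc.cut_left_commutative {A : NProp}
    (cut : ∀ {Γ : Ctx} {U : Succ}, Γ.suspNormal → U.suspNormal → U.stable →
      Inv Γ [] (.neg A) → LFoc Γ A U → Inv Γ [] U)
    {Γ Δ : Ctx} {B : PProp} (hΓ : Γ.suspNormal) (hsub : Δ ⊆ .neg A :: Γ) :
    RFoc Δ B → Inv Γ [] (.neg A) → RFoc Γ B
  | .idP m, _ => .idP (List.mem_of_ne_of_mem (by simp) (hsub m))
  | .downR e, d => .downR (e.cut_left_commutative cut hΓ trivial hsub d)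
  | .orR1 r, d => .orR1 (r.cut_left_commutative cut hΓ hsub d)
  | .orR2 r, d => .orR2 (r.cut_left_commutative cut hΓ hsub d)
  | .topR, _ => .topR
  | .andR r₁ r₂, d =>
    .andR (r₁.cut_left_commutative cut hΓ hsub d) (r₂.cut_left_commutative cut hΓ hsub d)

theorem Inv.cut_left_commutative {A : NProp}
    (cut : ∀ {Γ : Ctx} {U : Succ}, Γ.suspNormal → U.suspNormal → U.stable →
      Inv Γ [] (.neg A) → LFoc Γ A U → Inv Γ [] U)
    {Γ Δ : Ctx} {Ω : List PProp} {V : Succ} (hΓ : Γ.suspNormal) (hV : V.suspNormal)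
    (hsub : Δ ⊆ .neg A :: Γ) : Inv Δ Ω V → Inv Γ [] (.neg A) → Inv Γ Ω V
  | .focR r, d => .focR (r.cut_left_commutative cut hΓ hsub d)
  | .focL m hst l, d => by
    have l' := l.cut_left_commutative cut hΓ hV hsub d
    rcases List.mem_cons.1 (hsub m) with h | h
    · cases h
      exact cut hΓ hV hst d l'
    · exact .focL h hst l'
  | .etaP e, d => .etaP (e.cut_left_commutative cut (hΓ.cons trivial) hV
      (List.cons_subset_cons_cons_of_subset_cons hsub) (d.weaken_cons _))
  | .downL e, d => .downL (e.cut_left_commutative cut (hΓ.cons trivial) hV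
      (List.cons_subset_cons_cons_of_subset_cons hsub) (d.weaken_cons _))
  | .botL, _ => .botL
  | .orL e₁ e₂, d =>
    .orL (e₁.cut_left_commutative cut hΓ hV hsub d) (e₂.cut_left_commutative cut hΓ hV hsub d)
  | .topPL e, d => .topPL (e.cut_left_commutative cut hΓ hV hsub d)
  | .andPL e, d => .andPL (e.cut_left_commutative cut hΓ hV hsub d)
  | .etaN e, d => .etaN (e.cut_left_commutative cut hΓ trivial hsub d)
  | .upR e, d => .upR (e.cut_left_commutative cut hΓ trivial hsub d)
  | .impR e, d => .impR (e.cut_left_commutative cut hΓ trivial hsub d)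
  | .topNR, _ => .topNR
  | .andNR e₁ e₂, d => .andNR (e₁.cut_left_commutative cut hΓ trivial hsub d)
      (e₂.cut_left_commutative cut hΓ trivial hsub d)

theorem LFoc.cut_left_commutative {A : NProp}
    (cut : ∀ {Γ : Ctx} {U : Succ}, Γ.suspNormal → U.suspNormal → U.stable →
      Inv Γ [] (.neg A) → LFoc Γ A U → Inv Γ [] U)
    {Γ Δ : Ctx} {B : NProp} {V : Succ} (hΓ : Γ.suspNormal) (hV : V.suspNormal)
    (hsub : Δ ⊆ .neg A :: Γ) : LFoc Δ B V → Inv Γ [] (.neg A) → LFoc Γ B V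
  | .idN, _ => .idN
  | .upL e, d => .upL (e.cut_left_commutative cut hΓ hV hsub d)
  | .impL r l, d =>
    .impL (r.cut_left_commutative cut hΓ hsub d) (l.cut_left_commutative cut hΓ hV hsub d)
  | .andL1 l, d => .andL1 (l.cut_left_commutative cut hΓ hV hsub d)
  | .andL2 l, d => .andL2 (l.cut_left_commutative cut hΓ hV hsub d)
end

mutual
theorem cut_negative_principal {Γ : Ctx} {A : NProp} {U : Succ} (hΓ : Γ.suspNormal)
    (hU : U.suspNormal) (hst : U.stable) (d : Inv Γ [] (.neg A)) (l : LFoc Γ A U) :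
    Inv Γ [] U := by
  cases l with
  | idN =>
    obtain ⟨p, rfl⟩ := Succ.exists_atom_of_suspNormal_susp hU
    cases d with
    | etaN d => exact d
    | focL _ h _ => exact h.elim
  | upL e =>
    cases d with
    | upR d => exact d.cut_right_commutative hst (cut_positive_principal · hU) hΓ rfl e
    | focL _ h _ => exact h.elim
  | impL r l =>
    cases d with
    | impR d => exact cut_negative_principal hΓ hU hst (cut_positive_principal hΓ trivial r d) l
    | focL _ h _ => exact h.elim
  | andL1 l =>
    cases d with
    | andNR d _ => exact cut_negative_principal hΓ hU hst d l
    | focL _ h _ => exact h.elim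
  | andL2 l =>
    cases d with
    | andNR _ d => exact cut_negative_principal hΓ hU hst d l
    | focL _ h _ => exact h.elim
termination_by sizeOf A

/-- Cut admissibility, positive principal case. -/
theorem cut_positive_principal {Γ : Ctx} {A : PProp} {Ω : List PProp} {U : Succ}
    (hΓ : Ctx.suspNormal Γ) (hU : Succ.suspNormal U)
    (h1 : RFoc Γ A) (h2 : Inv Γ (A :: Ω) U) :
    Inv Γ Ω U := by
  cases h1 with
  | idP m =>
    obtain ⟨p, rfl⟩ := Hyp.exists_atom_of_suspNormal_susp (hΓ _ m)
    cases h2 with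
    | etaP e => exact e.weaken (List.cons_subset.2 ⟨m, List.Subset.refl _⟩)
  | downR d =>
    cases h2 with
    | downL e =>
      exact e.cut_left_commutative (cut_negative_principal · · · · ·) hΓ hU (List.Subset.refl _) d
  | orR1 r => cases h2 with | orL e _ => exact cut_positive_principal hΓ hU r e
  | orR2 r => cases h2 with | orL _ e => exact cut_positive_principal hΓ hU r e
  | topR => cases h2 with | topPL e => exact e
  | andR r₁ r₂ =>
    cases h2 with
    | andPL e => exact cut_positive_principal hΓ hU r₂ (cut_positive_principal hΓ hU r₁ e)
termination_by sizeOf A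
end

end StructuralFocalization
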